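/- Let a > b > 0. For any triangle P₁P₂P₃ inscribed in the circle of radius a + b centered at the origin whose three side lines are each tangent to the concentric ellipse x²/a² + y²/b² = 1 (i.e., each side lies on a line {(x,y) : p·x + q·y = 1} with a²p² + b²q² = 1), the cosine of each interior angle lies in the closed interval [b/(a+b), a/(a+b)]. In particular every triangle of this family is acute. -/

import Mathlib

/-!
Put `R = a + b`, `c = a b R` and `B(P, Q) = b x x' + a y y'` (the form `diagForm b a`).
Eliminating the line coefficients shows that the chord through two distinct points `P, Q` of the
circle of radius `R` is tangent to the ellipse iff `B(P, Q) = -c`. On the circle this relation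
determines the inner product, `2 (a b)² ⟪P, Q⟫ = (B(P, P) - c) (B(Q, Q) - c) - 2 c²`, and bounds
it, `2 b² ≤ R² + ⟪P, Q⟫ ≤ 2 a²`. Three plane vectors have a vanishing Gram determinant for `B`;
for the vertices this makes `⟪P₂ - P₁, P₃ - P₁⟫` a positive multiple of
`(B(P₁, P₁) + c) (B(P₂, P₂) - c) (B(P₃, P₃) - c)`, which is positive as `B(P, P) ≥ b R² > c`.
So every angle is acute, and the inscribed angle theorem `2 R² cos² A = R² + ⟪P₂, P₃⟫` (the
vanishing Euclidean Gram determinant) turns the bounds on `⟪P₂, P₃⟫` into those on `cos A`.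
-/

open EuclideanGeometry

/-- The line through `P` and `Q` is tangent to the ellipse `x²/a² + y²/b² = 1`:
it lies on a line `{(x,y) : p·x + q·y = 1}` with `a²p² + b²q² = 1`. -/
def SideTangentToEllipse (a b : ℝ) (P Q : EuclideanSpace ℝ (Fin 2)) : Prop :=
  ∃ p q : ℝ, a ^ 2 * p ^ 2 + b ^ 2 * q ^ 2 = 1 ∧
    p * P 0 + q * P 1 = 1 ∧ p * Q 0 + q * Q 1 = 1

open Real

section Plane

variable {α β : ℝ} {P Q : EuclideanSpace ℝ (Fin 2)}

theorem EuclideanSpace.inner_fin_two : inner ℝ P Q = P 0 * Q 0 + P 1 * Q 1 := by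
  simp [PiLp.inner_apply, Fin.sum_univ_two]; ring

theorem EuclideanSpace.norm_sq_fin_two : ‖P‖ ^ 2 = P 0 ^ 2 + P 1 ^ 2 := by
  simp [EuclideanSpace.real_norm_sq_eq, Fin.sum_univ_two]

def diagForm (α β : ℝ) (P Q : EuclideanSpace ℝ (Fin 2)) : ℝ :=
  α * (P 0 * Q 0) + β * (P 1 * Q 1)

theorem diagForm_comm : diagForm α β P Q = diagForm α β Q P := by
  simp only [diagForm]; ring

theorem mul_norm_sq_le_diagForm (h : α ≤ β) (P : EuclideanSpace ℝ (Fin 2)) :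
    α * ‖P‖ ^ 2 ≤ diagForm α β P P := by
  rw [EuclideanSpace.norm_sq_fin_two, diagForm]
  nlinarith [sq_nonneg (P 1)]

theorem diagForm_gram_det (α β : ℝ) (P₁ P₂ P₃ : EuclideanSpace ℝ (Fin 2)) :
    let g := diagForm α β
    g P₁ P₁ * g P₂ P₂ * g P₃ P₃ + 2 * g P₁ P₂ * g P₂ P₃ * g P₁ P₃ =
      g P₁ P₁ * g P₂ P₃ ^ 2 + g P₂ P₂ * g P₁ P₃ ^ 2 + g P₃ P₃ * g P₁ P₂ ^ 2 := by
  simp only [diagForm]; ring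

theorem inner_gram_det (P₁ P₂ P₃ : EuclideanSpace ℝ (Fin 2)) :
    ‖P₁‖ ^ 2 * ‖P₂‖ ^ 2 * ‖P₃‖ ^ 2 + 2 * inner ℝ P₁ P₂ * inner ℝ P₂ P₃ * inner ℝ P₁ P₃ =
      ‖P₁‖ ^ 2 * inner ℝ P₂ P₃ ^ 2 + ‖P₂‖ ^ 2 * inner ℝ P₁ P₃ ^ 2 +
        ‖P₃‖ ^ 2 * inner ℝ P₁ P₂ ^ 2 := by
  simp only [EuclideanSpace.norm_sq_fin_two, EuclideanSpace.inner_fin_two]; ring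

theorem inner_sub_sub_eq {V : Type*} [NormedAddCommGroup V] [InnerProductSpace ℝ V]
    (A B C : V) :
    inner ℝ (B - A) (C - A) = ‖A‖ ^ 2 + inner ℝ B C - inner ℝ A B - inner ℝ A C := by
  simp only [inner_sub_left, inner_sub_right, real_inner_self_eq_norm_sq, real_inner_comm A B]
  ring

theorem angle_lt_pi_div_two_of_cos_pos {V P : Type*} [NormedAddCommGroup V]
    [InnerProductSpace ℝ V] [MetricSpace P] [NormedAddTorsor V P] {A B C : P}
    (h : 0 < cos (∠ B A C)) : ∠ B A C < π / 2 := by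
  by_contra! h'
  exact h.not_ge (cos_nonpos_of_pi_div_two_le_of_le h' (by linarith [angle_le_pi B A C, pi_pos]))

theorem two_mul_sq_mul_cos_angle_sq {R : ℝ} {A B C : EuclideanSpace ℝ (Fin 2)}
    (hBA : B ≠ A) (hCA : C ≠ A) (hA : ‖A‖ = R) (hB : ‖B‖ = R) (hC : ‖C‖ = R) :
    2 * R ^ 2 * cos (∠ B A C) ^ 2 = R ^ 2 + inner ℝ B C := by
  have hgram := inner_gram_det A B C
  have hAB : ‖B - A‖ ^ 2 = 2 * R ^ 2 - 2 * inner ℝ A B := by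
    rw [norm_sub_sq_real, hA, hB, real_inner_comm]; ring
  have hAC : ‖C - A‖ ^ 2 = 2 * R ^ 2 - 2 * inner ℝ A C := by
    rw [norm_sub_sq_real, hA, hC, real_inner_comm]; ring
  have hBA' : ‖B - A‖ ≠ 0 := norm_ne_zero_iff.2 (sub_ne_zero.2 hBA)
  have hCA' : ‖C - A‖ ≠ 0 := norm_ne_zero_iff.2 (sub_ne_zero.2 hCA)
  rw [show ∠ B A C = InnerProductGeometry.angle (B - A) (C - A) from rfl,
    InnerProductGeometry.cos_angle, div_pow, mul_pow, inner_sub_sub_eq, hA]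
  field_simp
  rw [hAB, hAC]
  rw [hA, hB, hC] at hgram
  linear_combination (-2) * hgram

end Plane

section Family

variable {a b : ℝ} {P Q : EuclideanSpace ℝ (Fin 2)}

theorem diagForm_eq_of_sideTangentToEllipse (hPQ : P ≠ Q) (hP : ‖P‖ = a + b)
    (hQ : ‖Q‖ = a + b) (h : SideTangentToEllipse a b P Q) :
    diagForm b a P Q = -(a * b * (a + b)) := by
  obtain ⟨p, q, hpq, hPl, hQl⟩ := h
  have hP' : P 0 ^ 2 + P 1 ^ 2 = (a + b) ^ 2 := by rw [← EuclideanSpace.norm_sq_fin_two, hP]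
  have hQ' : Q 0 ^ 2 + Q 1 ^ 2 = (a + b) ^ 2 := by rw [← EuclideanSpace.norm_sq_fin_two, hQ]
  have hdist : 0 < (P 0 - Q 0) ^ 2 + (P 1 - Q 1) ^ 2 := by
    rw [← PiLp.sub_apply, ← PiLp.sub_apply, ← EuclideanSpace.norm_sq_fin_two]
    exact pow_pos (norm_pos_iff.2 (sub_ne_zero.2 hPQ)) 2
  unfold diagForm
  set x := P 0; set y := P 1; set x' := Q 0; set y' := Q 1
  have hp : p * (x * y' - x' * y) = y' - y := by linear_combination y' * hPl - y * hQl
  have hq : q * (x * y' - x' * y) = x - x' := by linear_combination x * hQl - x' * hPl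
  have htangent : a ^ 2 * (y - y') ^ 2 + b ^ 2 * (x - x') ^ 2 = (x * y' - x' * y) ^ 2 := by
    linear_combination (x * y' - x' * y) ^ 2 * hpq
      - a ^ 2 * (p * (x * y' - x' * y) + y' - y) * hp
      - b ^ 2 * (q * (x * y' - x' * y) + x - x') * hq
  have hprod : (b * (x * x') + a * (y * y') + a * b * (a + b)) *
      ((x - x') ^ 2 + (y - y') ^ 2) = 0 := by
    linear_combination (-(a + b)) * htangent
      + (b * (x * x') + a * (y * y') + a * b * (a + b) - 2 * b * x' ^ 2
        - (a + b) * (y' ^ 2 - b ^ 2)) * hP'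
      + (b * (x * x') + a * (y * y') + a * b * (a + b) - 2 * b * ((a + b) ^ 2 - y ^ 2)
        - (a + b) * (y ^ 2 - b ^ 2)) * hQ'
  linear_combination (mul_eq_zero.1 hprod).resolve_right hdist.ne'

theorem inner_mem_Icc_of_diagForm_eq (hb : 0 < b) (hab : b ≤ a) (hP : ‖P‖ = a + b)
    (hQ : ‖Q‖ = a + b) (h : diagForm b a P Q = -(a * b * (a + b))) :
    2 * b ^ 2 ≤ (a + b) ^ 2 + inner ℝ P Q ∧ (a + b) ^ 2 + inner ℝ P Q ≤ 2 * a ^ 2 := by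
  have hP' : P 0 ^ 2 + P 1 ^ 2 = (a + b) ^ 2 := by rw [← EuclideanSpace.norm_sq_fin_two, hP]
  have hQ' : Q 0 ^ 2 + Q 1 ^ 2 = (a + b) ^ 2 := by rw [← EuclideanSpace.norm_sq_fin_two, hQ]
  rw [EuclideanSpace.inner_fin_two]
  unfold diagForm at h
  set x := P 0; set y := P 1; set x' := Q 0; set y' := Q 1
  -- `x x' - y y'` is the real part of a product of two complex numbers of modulus `a + b`
  have hre : (x * x' - y * y') ^ 2 ≤ ((a + b) ^ 2) ^ 2 := by
    nlinarith [sq_nonneg (x * y' + x' * y)]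
  obtain ⟨hre_lo, hre_hi⟩ := abs_le_of_sq_le_sq' hre (by positivity)
  have hlin : (a + b) * (x * x' + y * y' + 2 * a * b) = (a - b) * (x * x' - y * y') := by
    linear_combination 2 * h
  have hR : 0 < a + b := by linarith
  constructor <;> nlinarith [mul_le_mul_of_nonneg_left hre_lo (sub_nonneg.2 hab),
    mul_le_mul_of_nonneg_left hre_hi (sub_nonneg.2 hab)]

theorem two_mul_sq_mul_inner_of_diagForm_eq (hR : a + b ≠ 0) (hP : ‖P‖ = a + b)
    (hQ : ‖Q‖ = a + b) (h : diagForm b a P Q = -(a * b * (a + b))) :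
    2 * (a * b) ^ 2 * inner ℝ P Q = (diagForm b a P P - a * b * (a + b)) *
      (diagForm b a Q Q - a * b * (a + b)) - 2 * (a * b * (a + b)) ^ 2 := by
  have hP' : P 0 ^ 2 + P 1 ^ 2 = (a + b) ^ 2 := by rw [← EuclideanSpace.norm_sq_fin_two, hP]
  have hQ' : Q 0 ^ 2 + Q 1 ^ 2 = (a + b) ^ 2 := by rw [← EuclideanSpace.norm_sq_fin_two, hQ]
  rw [EuclideanSpace.inner_fin_two]
  unfold diagForm at h ⊢
  set x := P 0; set y := P 1; set x' := Q 0; set y' := Q 1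
  have hy : a ^ 2 * (y * y') ^ 2 = (b * (x * x') + a * b * (a + b)) ^ 2 := by
    linear_combination (a * (y * y') - b * (x * x') - a * b * (a + b)) * h
  have hx : (x * x') ^ 2 = ((a + b) ^ 2 - y ^ 2) * ((a + b) ^ 2 - y' ^ 2) := by
    linear_combination x' ^ 2 * hP' + ((a + b) ^ 2 - y ^ 2) * hQ'
  refine mul_left_cancel₀ hR ?_
  linear_combination (2 * a ^ 2 * b * (a + b) - 2 * a * b * (a + b) * (a - b)) * h
    - (a - b) * hy - b ^ 2 * (a - b) * hx
    + (b * (a + b) * (a * b * (a + b) - (b * x' ^ 2 + a * y' ^ 2))) * hP'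
    + (b * (a + b) * (a * b * (a + b) - (b * (a + b) ^ 2 + (a - b) * y ^ 2))) * hQ'

theorem inner_sub_sub_pos (hb : 0 < b) (hab : b ≤ a) {A B C : EuclideanSpace ℝ (Fin 2)}
    (hA : ‖A‖ = a + b) (hB : ‖B‖ = a + b) (hC : ‖C‖ = a + b)
    (hAB : diagForm b a A B = -(a * b * (a + b))) (hAC : diagForm b a A C = -(a * b * (a + b)))
    (hBC : diagForm b a B C = -(a * b * (a + b))) :
    0 < inner ℝ (B - A) (C - A) := by
  have hR : 0 < a + b := by linarith
  set c := a * b * (a + b)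
  have hc_pos : 0 < c := by have := hb.trans_le hab; positivity
  have hgram := diagForm_gram_det b a A B C
  simp only [hAB, hAC, hBC] at hgram
  have hsAB := two_mul_sq_mul_inner_of_diagForm_eq hR.ne' hA hB hAB
  have hsAC := two_mul_sq_mul_inner_of_diagForm_eq hR.ne' hA hC hAC
  have hsBC := two_mul_sq_mul_inner_of_diagForm_eq hR.ne' hB hC hBC
  have hkey : 2 * (a * b) ^ 2 * c * inner ℝ (B - A) (C - A) =
      (diagForm b a A A + c) * (diagForm b a B B - c) * (diagForm b a C C - c) := by
    rw [inner_sub_sub_eq, hA]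
    linear_combination c * hsBC - c * hsAB - c * hsAC - hgram
  have hlower : ∀ P : EuclideanSpace ℝ (Fin 2), ‖P‖ = a + b → c < diagForm b a P P := by
    intro P hP
    have := mul_norm_sq_le_diagForm hab P
    rw [hP] at this
    nlinarith
  have hA' := hlower A hA
  have hB' := hlower B hB
  have hC' := hlower C hC
  have hprod : 0 < (diagForm b a A A + c) * (diagForm b a B B - c) * (diagForm b a C C - c) :=
    mul_pos (mul_pos (by linarith) (by linarith)) (by linarith)
  exact pos_of_mul_pos_right (hkey ▸ hprod) (by positivity)

theorem cos_angle_mem_Icc (hb : 0 < b) (hab : b ≤ a) {A B C : EuclideanSpace ℝ (Fin 2)}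
    (hA : ‖A‖ = a + b) (hB : ‖B‖ = a + b) (hC : ‖C‖ = a + b)
    (hAB : diagForm b a A B = -(a * b * (a + b))) (hAC : diagForm b a A C = -(a * b * (a + b)))
    (hBC : diagForm b a B C = -(a * b * (a + b))) :
    cos (∠ B A C) ∈ Set.Icc (b / (a + b)) (a / (a + b)) := by
  have hR : 0 < a + b := by linarith
  have hpos := inner_sub_sub_pos hb hab hA hB hC hAB hAC hBC
  have hBA : B ≠ A := by rintro rfl; simp at hpos
  have hCA : C ≠ A := by rintro rfl; simp at hpos
  have hcos : 0 ≤ cos (∠ B A C) := by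
    rw [show ∠ B A C = InnerProductGeometry.angle (B - A) (C - A) from rfl,
      InnerProductGeometry.cos_angle]
    positivity
  have hsq := two_mul_sq_mul_cos_angle_sq hBA hCA hA hB hC
  obtain ⟨hlo, hhi⟩ := inner_mem_Icc_of_diagForm_eq hb hab hB hC hBC
  have hRcos : 0 ≤ (a + b) * cos (∠ B A C) := by positivity
  rw [Set.mem_Icc, div_le_iff₀' hR, le_div_iff₀' hR]
  constructor
  · exact (sq_le_sq₀ hb.le hRcos).1 (by nlinarith)
  · exact (sq_le_sq₀ hRcos (by linarith)).1 (by nlinarith)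

end Family

/-- For `a > b > 0`: the cosine of each interior angle of any triangle of the
circumcircle family (inscribed in the circle of radius `a + b` centered at the
origin, side lines tangent to the concentric ellipse `x²/a² + y²/b² = 1`) lies
in the interval `[b/(a+b), a/(a+b)]`; in particular every such triangle is
acute (all interior angles are less than `π/2`). -/
theorem circumcircle_family_cosine_bounds_acute (a b : ℝ) (hb : 0 < b) (hab : b < a)
    (P₁ P₂ P₃ : EuclideanSpace ℝ (Fin 2))
    (hind : AffineIndependent ℝ ![P₁, P₂, P₃])
    (hC₁ : dist P₁ 0 = a + b) (hC₂ : dist P₂ 0 = a + b) (hC₃ : dist P₃ 0 = a + b)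
    (ht₁ : SideTangentToEllipse a b P₁ P₂)
    (ht₂ : SideTangentToEllipse a b P₂ P₃)
    (ht₃ : SideTangentToEllipse a b P₃ P₁) :
    (Real.cos (∠ P₂ P₁ P₃) ∈ Set.Icc (b / (a + b)) (a / (a + b)) ∧
     Real.cos (∠ P₁ P₂ P₃) ∈ Set.Icc (b / (a + b)) (a / (a + b)) ∧
     Real.cos (∠ P₁ P₃ P₂) ∈ Set.Icc (b / (a + b)) (a / (a + b))) ∧
    (∠ P₂ P₁ P₃ < Real.pi / 2 ∧ ∠ P₁ P₂ P₃ < Real.pi / 2 ∧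
     ∠ P₁ P₃ P₂ < Real.pi / 2) := by
  rw [dist_zero_right] at hC₁ hC₂ hC₃
  have h₁₂ := diagForm_eq_of_sideTangentToEllipse
    (hind.injective.ne (by decide : (0 : Fin 3) ≠ 1)) hC₁ hC₂ ht₁
  have h₂₃ := diagForm_eq_of_sideTangentToEllipse
    (hind.injective.ne (by decide : (1 : Fin 3) ≠ 2)) hC₂ hC₃ ht₂
  have h₃₁ := diagForm_eq_of_sideTangentToEllipse
    (hind.injective.ne (by decide : (2 : Fin 3) ≠ 0)) hC₃ hC₁ ht₃
  have hcos₁ := cos_angle_mem_Icc hb hab.le hC₁ hC₂ hC₃ h₁₂ (diagForm_comm.trans h₃₁) h₂₃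
  have hcos₂ := cos_angle_mem_Icc hb hab.le hC₂ hC₁ hC₃ (diagForm_comm.trans h₁₂) h₂₃
    (diagForm_comm.trans h₃₁)
  have hcos₃ := cos_angle_mem_Icc hb hab.le hC₃ hC₁ hC₂ h₃₁ (diagForm_comm.trans h₂₃) h₁₂
  have hlow : 0 < b / (a + b) := by have := hb.trans hab; positivity
  exact ⟨⟨hcos₁, hcos₂, hcos₃⟩,
    angle_lt_pi_div_two_of_cos_pos (hlow.trans_le hcos₁.1),
    angle_lt_pi_div_two_of_cos_pos (hlow.trans_le hcos₂.1),
    angle_lt_pi_div_two_of_cos_pos (hlow.trans_le hcos₃.1)⟩
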